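/- Let k be an algebraically closed field and let A and B be finite-dimensional k-algebras with A ≤_J B. If there are, up to isomorphism, only finitely many finite-dimensional indecomposable right A-modules, then there are, up to isomorphism, only finitely many finite-dimensional indecomposable right B-modules. In particular, if A ∼_J B then A has finite representation type if and only if B does. -/

import Mathlib

/-!
If `B` is a bimodule direct summand of `M ⊗_A N`, every right `B`-module `X` is a retract of
`(X ⊗_B M) ⊗_A N`. Decompose the `A`-module `X ⊗_B M` into indecomposables; each of them is
isomorphic to one of the finitely many indecomposable `A`-modules `V i`. By Fitting's lemma an
indecomposable module of finite length has a local endomorphism ring, so an indecomposable retract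
of a finite direct sum is a retract of, hence isomorphic to, one of the summands. Applied twice,
this shows that every indecomposable `B`-module is a summand of one of the finitely many modules
`V i ⊗_A N`.
-/

set_option linter.unusedSectionVars false

open scoped TensorProduct
open MulOpposite

universe u

namespace JJ

noncomputable section

section BalTensor

variable (B : Type u) [Ring B] (M : Type u) [AddCommGroup M] [Module Bᵐᵒᵖ M]
  (N : Type u) [AddCommGroup N] [Module B N]

/-- The subgroup of relations defining the balanced tensor product `M ⊗_B N`. -/
def balRel : Submodule ℤ (TensorProduct ℤ M N) :=
  Submodule.span ℤ { z | ∃ (b : B) (m : M) (n : N),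
    z = (op b • m) ⊗ₜ[ℤ] n - m ⊗ₜ[ℤ] (b • n) }

/-- The balanced tensor product `M ⊗_B N` of a right `B`-module `M` and a left `B`-module `N`. -/
def BalTensor : Type u := TensorProduct ℤ M N ⧸ balRel B M N

instance : AddCommGroup (BalTensor B M N) :=
  inferInstanceAs (AddCommGroup (TensorProduct ℤ M N ⧸ balRel B M N))

/-- The canonical projection onto the balanced tensor product. -/
def BalTensor.mk : TensorProduct ℤ M N →+ BalTensor B M N :=
  (balRel B M N).mkQ.toAddMonoidHom

/-- The image of a pure tensor in the balanced tensor product. -/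
def BalTensor.tmul (m : M) (n : N) : BalTensor B M N := BalTensor.mk B M N (m ⊗ₜ n)

lemma BalTensor.mk_surjective : Function.Surjective (BalTensor.mk B M N) :=
  Submodule.mkQ_surjective _

lemma BalTensor.balance (b : B) (m : M) (n : N) :
    BalTensor.tmul B M N (op b • m) n = BalTensor.tmul B M N m (b • n) := by
  have h : ((op b • m) ⊗ₜ[ℤ] n - m ⊗ₜ[ℤ] (b • n)) ∈ balRel B M N :=
    Submodule.subset_span ⟨b, m, n, rfl⟩
  have h2 := (Submodule.Quotient.mk_eq_zero (balRel B M N)).2 h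
  rw [Submodule.Quotient.mk_sub] at h2
  exact sub_eq_zero.1 h2

end BalTensor

section LeftAction

variable (B : Type u) [Ring B] (M : Type u) [AddCommGroup M] [Module Bᵐᵒᵖ M]
  (N : Type u) [AddCommGroup N] [Module B N]
  (A : Type u) [Ring A] [Module A M] [SMulCommClass A Bᵐᵒᵖ M]

/-- The left action of `a : A` on the plain tensor product. -/
def lActAux (a : A) : TensorProduct ℤ M N →ₗ[ℤ] TensorProduct ℤ M N :=
  LinearMap.rTensor N (DistribMulAction.toAddMonoidHom M a).toIntLinearMap

lemma lActAux_tmul (a : A) (m : M) (n : N) :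
    lActAux M N A a (m ⊗ₜ n) = (a • m) ⊗ₜ n := by
  first | rfl | exact LinearMap.rTensor_tmul _ _ _ _ | exact LinearMap.rTensor_tmul _ _ _

lemma lActAux_rel (a : A) :
    balRel B M N ≤ (balRel B M N).comap (lActAux M N A a) := by
  rw [balRel, Submodule.span_le]
  rintro z ⟨b, m, n, rfl⟩
  simp only [SetLike.mem_coe, Submodule.mem_comap, map_sub, lActAux_tmul]
  rw [smul_comm a (op b) m]
  exact Submodule.subset_span ⟨b, a • m, n, rfl⟩

/-- The left action of `A` on the balanced tensor product. -/
def lAct (a : A) : BalTensor B M N →ₗ[ℤ] BalTensor B M N :=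
  Submodule.mapQ _ _ (lActAux M N A a) (lActAux_rel B M N A a)

instance : SMul A (BalTensor B M N) := ⟨fun a x => lAct B M N A a x⟩

lemma BalTensor.lsmul_mk (a : A) (x : TensorProduct ℤ M N) :
    a • (BalTensor.mk B M N x) = BalTensor.mk B M N (lActAux M N A a x) := rfl

lemma BalTensor.lsmul_tmul (a : A) (m : M) (n : N) :
    a • (BalTensor.tmul B M N m n) = BalTensor.tmul B M N (a • m) n := by
  rw [BalTensor.tmul, BalTensor.lsmul_mk, lActAux_tmul]
  rfl

instance BalTensor.instLeftModule : Module A (BalTensor B M N) where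
  one_smul x := by
    obtain ⟨y, rfl⟩ := BalTensor.mk_surjective B M N x
    rw [BalTensor.lsmul_mk]
    congr 1
    have h : lActAux M N A (1 : A) = LinearMap.id :=
      LinearMap.ext fun y => TensorProduct.induction_on y (by simp only [map_zero]) (fun m n => by rw [lActAux_tmul, one_smul]; rfl) (fun x y hx hy => by simp only [map_add, hx, hy])
    rw [h]; rfl
  mul_smul a b x := by
    obtain ⟨y, rfl⟩ := BalTensor.mk_surjective B M N x
    rw [BalTensor.lsmul_mk, BalTensor.lsmul_mk, BalTensor.lsmul_mk]
    congr 1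
    have h : lActAux M N A (a * b) = (lActAux M N A a).comp (lActAux M N A b) :=
      LinearMap.ext fun y => TensorProduct.induction_on y (by simp only [map_zero]) (fun m n => by
        simp only [LinearMap.comp_apply, lActAux_tmul, mul_smul]) (fun x y hx hy => by simp only [map_add, hx, hy])
    rw [h]; rfl
  smul_zero a := map_zero (lAct B M N A a)
  smul_add a x y := map_add (lAct B M N A a) x y
  add_smul a b x := by
    obtain ⟨y, rfl⟩ := BalTensor.mk_surjective B M N x
    rw [BalTensor.lsmul_mk, BalTensor.lsmul_mk, BalTensor.lsmul_mk, ← map_add]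
    congr 1
    have h : lActAux M N A (a + b) = lActAux M N A a + lActAux M N A b :=
      LinearMap.ext fun y => TensorProduct.induction_on y (by simp only [map_zero]) (fun m n => by
        simp only [LinearMap.add_apply, lActAux_tmul, add_smul, TensorProduct.add_tmul]) (fun x y hx hy => by simp only [map_add, hx, hy])
    rw [h]; rfl
  zero_smul x := by
    obtain ⟨y, rfl⟩ := BalTensor.mk_surjective B M N x
    rw [BalTensor.lsmul_mk]
    have h : lActAux M N A (0 : A) = 0 :=
      LinearMap.ext fun y => TensorProduct.induction_on y (by simp only [map_zero]) (fun m n => by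
        simp only [lActAux_tmul, zero_smul, TensorProduct.zero_tmul, LinearMap.zero_apply]) (fun x y hx hy => by simp only [map_add, hx, hy])
    rw [h]
    simp

end LeftAction

section RightAction

variable (B : Type u) [Ring B] (M : Type u) [AddCommGroup M] [Module Bᵐᵒᵖ M]
  (N : Type u) [AddCommGroup N] [Module B N]
  (C : Type u) [Ring C] [Module Cᵐᵒᵖ N] [SMulCommClass B Cᵐᵒᵖ N]

/-- The right action of `c : Cᵐᵒᵖ` on the plain tensor product. -/
def rActAux (c : Cᵐᵒᵖ) : TensorProduct ℤ M N →ₗ[ℤ] TensorProduct ℤ M N :=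
  LinearMap.lTensor M (DistribMulAction.toAddMonoidHom N c).toIntLinearMap

lemma rActAux_tmul (c : Cᵐᵒᵖ) (m : M) (n : N) :
    rActAux M N C c (m ⊗ₜ n) = m ⊗ₜ (c • n) := by
  first | rfl | exact LinearMap.lTensor_tmul _ _ _ _ | exact LinearMap.lTensor_tmul _ _ _

lemma rActAux_rel (c : Cᵐᵒᵖ) :
    balRel B M N ≤ (balRel B M N).comap (rActAux M N C c) := by
  rw [balRel, Submodule.span_le]
  rintro z ⟨b, m, n, rfl⟩
  simp only [SetLike.mem_coe, Submodule.mem_comap, map_sub, rActAux_tmul]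
  rw [← smul_comm b c n]
  exact Submodule.subset_span ⟨b, m, c • n, rfl⟩

/-- The right action of `Cᵐᵒᵖ` on the balanced tensor product. -/
def rAct (c : Cᵐᵒᵖ) : BalTensor B M N →ₗ[ℤ] BalTensor B M N :=
  Submodule.mapQ _ _ (rActAux M N C c) (rActAux_rel B M N C c)

instance : SMul Cᵐᵒᵖ (BalTensor B M N) := ⟨fun c x => rAct B M N C c x⟩

lemma BalTensor.rsmul_mk (c : Cᵐᵒᵖ) (x : TensorProduct ℤ M N) :
    c • (BalTensor.mk B M N x) = BalTensor.mk B M N (rActAux M N C c x) := rfl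

lemma BalTensor.rsmul_tmul (c : Cᵐᵒᵖ) (m : M) (n : N) :
    c • (BalTensor.tmul B M N m n) = BalTensor.tmul B M N m (c • n) := by
  rw [BalTensor.tmul, BalTensor.rsmul_mk, rActAux_tmul]
  rfl

instance BalTensor.instRightModule : Module Cᵐᵒᵖ (BalTensor B M N) where
  one_smul x := by
    obtain ⟨y, rfl⟩ := BalTensor.mk_surjective B M N x
    rw [BalTensor.rsmul_mk]
    congr 1
    have h : rActAux M N C (1 : Cᵐᵒᵖ) = LinearMap.id :=
      LinearMap.ext fun y => TensorProduct.induction_on y (by simp only [map_zero]) (fun m n => by rw [rActAux_tmul, one_smul]; rfl) (fun x y hx hy => by simp only [map_add, hx, hy])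
    rw [h]; rfl
  mul_smul a b x := by
    obtain ⟨y, rfl⟩ := BalTensor.mk_surjective B M N x
    rw [BalTensor.rsmul_mk, BalTensor.rsmul_mk, BalTensor.rsmul_mk]
    congr 1
    have h : rActAux M N C (a * b) = (rActAux M N C a).comp (rActAux M N C b) :=
      LinearMap.ext fun y => TensorProduct.induction_on y (by simp only [map_zero]) (fun m n => by
        simp only [LinearMap.comp_apply, rActAux_tmul, mul_smul]) (fun x y hx hy => by simp only [map_add, hx, hy])
    rw [h]; rfl
  smul_zero c := map_zero (rAct B M N C c)
  smul_add c x y := map_add (rAct B M N C c) x y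
  add_smul a b x := by
    obtain ⟨y, rfl⟩ := BalTensor.mk_surjective B M N x
    rw [BalTensor.rsmul_mk, BalTensor.rsmul_mk, BalTensor.rsmul_mk, ← map_add]
    congr 1
    have h : rActAux M N C (a + b) = rActAux M N C a + rActAux M N C b :=
      LinearMap.ext fun y => TensorProduct.induction_on y (by simp only [map_zero]) (fun m n => by
        simp only [LinearMap.add_apply, rActAux_tmul, add_smul, TensorProduct.tmul_add]) (fun x y hx hy => by simp only [map_add, hx, hy])
    rw [h]; rfl
  zero_smul x := by
    obtain ⟨y, rfl⟩ := BalTensor.mk_surjective B M N x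
    rw [BalTensor.rsmul_mk]
    have h : rActAux M N C (0 : Cᵐᵒᵖ) = 0 :=
      LinearMap.ext fun y => TensorProduct.induction_on y (by simp only [map_zero]) (fun m n => by
        simp only [rActAux_tmul, zero_smul, TensorProduct.tmul_zero, LinearMap.zero_apply]) (fun x y hx hy => by simp only [map_add, hx, hy])
    rw [h]
    simp

end RightAction

section Comm

variable (B : Type u) [Ring B] (M : Type u) [AddCommGroup M] [Module Bᵐᵒᵖ M]
  (N : Type u) [AddCommGroup N] [Module B N]
  (A : Type u) [Ring A] [Module A M] [SMulCommClass A Bᵐᵒᵖ M]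
  (C : Type u) [Ring C] [Module Cᵐᵒᵖ N] [SMulCommClass B Cᵐᵒᵖ N]

instance BalTensor.instSMulCommClass : SMulCommClass A Cᵐᵒᵖ (BalTensor B M N) := by
  constructor
  intro a c x
  obtain ⟨y, rfl⟩ := BalTensor.mk_surjective B M N x
  rw [BalTensor.rsmul_mk, BalTensor.lsmul_mk, BalTensor.lsmul_mk, BalTensor.rsmul_mk]
  congr 1
  have h : (lActAux M N A a).comp (rActAux M N C c)
      = (rActAux M N C c).comp (lActAux M N A a) :=
    LinearMap.ext fun y => TensorProduct.induction_on y (by simp only [map_zero]) (fun m n => by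
      simp only [LinearMap.comp_apply, lActAux_tmul, rActAux_tmul]) (fun x y hx hy => by simp only [map_add, hx, hy])
  exact DFunLike.congr_fun h y

end Comm

section BimodHom

variable (A : Type u) [Ring A] (C : Type u) [Ring C]
variable (X : Type u) [AddCommGroup X] [Module A X] [Module Cᵐᵒᵖ X]
variable (Y : Type u) [AddCommGroup Y] [Module A Y] [Module Cᵐᵒᵖ Y]

/-- A map of `(A,C)`-bimodules: additive, left `A`-equivariant and right `C`-equivariant. -/
structure IsBimodHom (f : X → Y) : Prop where
  map_add : ∀ x y, f (x + y) = f x + f y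
  map_lsmul : ∀ (a : A) (x : X), f (a • x) = a • f x
  map_rsmul : ∀ (c : Cᵐᵒᵖ) (x : X), f (c • x) = c • f x

/-- `X` is (isomorphic to) a direct summand of `Y` as an `(A,C)`-bimodule,
i.e. a retract of `Y`. -/
def IsBimodSummand : Prop :=
  ∃ (i : X → Y) (p : Y → X), IsBimodHom A C X Y i ∧ IsBimodHom A C Y X p ∧ ∀ x, p (i x) = x

end BimodHom

section Jorder

variable (k : Type u) [Field k]

/-- A finite-dimensional `(A,B)`-bimodule over `k`, whose two induced `k`-actions agree
with the given one. -/
structure BimodData (A B : Type u) [Ring A] [Ring B] [Algebra k A] [Algebra k B] :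
    Type (u + 1) where
  X : Type u
  [acg : AddCommGroup X]
  [modk : Module k X]
  [modl : Module A X]
  [modr : Module Bᵐᵒᵖ X]
  [scc : SMulCommClass A Bᵐᵒᵖ X]
  [tl : IsScalarTower k A X]
  [tr : IsScalarTower k Bᵐᵒᵖ X]
  [fd : FiniteDimensional k X]

attribute [instance] BimodData.acg BimodData.modk BimodData.modl BimodData.modr BimodData.scc
  BimodData.tl BimodData.tr BimodData.fd

variable (A B : Type u) [Ring A] [Ring B] [Algebra k A] [Algebra k B]

/-- `A ≥_J B`: there are finite-dimensional bimodules `M`, `N` such that the regular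
`A`-`A`-bimodule `A` is a direct summand of `M ⊗_B N`. -/
def Jge : Prop :=
  ∃ (M : BimodData k A B) (N : BimodData k B A),
    IsBimodSummand A A A (BalTensor B M.X N.X)

/-- `A ≤_J B`. -/
def Jle : Prop := Jge k B A

/-- `A ∼_J B`: two-sided equivalence. -/
def Jequiv : Prop := Jge k A B ∧ Jge k B A

/-- `A >_J B`: strict two-sided inequality. -/
def Jgt : Prop := Jge k A B ∧ ¬ Jge k B A

end Jorder

section RepType

/-- An indecomposable module: nonzero, and admitting no splitting into
two nonzero complementary submodules. -/
def IsIndecomposableModule (R X : Type u) [Ring R] [AddCommGroup X] [Module R X] : Prop :=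
  Nontrivial X ∧ ∀ S T : Submodule R X, IsCompl S T → S = ⊥ ∨ T = ⊥

/-- A ring has finite representation type if there are, up to isomorphism, only finitely
many finite (i.e. finite-dimensional) indecomposable modules. -/
def FiniteRepresentationType (R : Type u) [Ring R] : Prop :=
  ∃ (n : ℕ) (V : Fin n → ModuleCat.{u} R),
    ∀ (X : ModuleCat.{u} R), Module.Finite R X → IsIndecomposableModule R X →
      ∃ i, Nonempty (X ≃ₗ[R] V i)

end RepType

namespace BalTensor

section Basic

variable {B : Type u} [Ring B] {M : Type u} [AddCommGroup M] [Module Bᵐᵒᵖ M]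
  {N : Type u} [AddCommGroup N] [Module B N]

@[elab_as_elim]
lemma induction_on {P : BalTensor B M N → Prop} (z : BalTensor B M N) (zero : P 0)
    (tmul : ∀ m n, P (BalTensor.tmul B M N m n)) (add : ∀ x y, P x → P y → P (x + y)) :
    P z := by
  obtain ⟨y, rfl⟩ := mk_surjective B M N z
  induction y using TensorProduct.induction_on with
  | zero => simpa using zero
  | tmul m n => exact tmul m n
  | add x y hx hy => rw [map_add]; exact add _ _ hx hy

lemma hom_ext {Q F : Type*} [AddZeroClass Q] [FunLike F (BalTensor B M N) Q]
    [AddMonoidHomClass F (BalTensor B M N) Q] {f g : F}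
    (h : ∀ m n, f (BalTensor.tmul B M N m n) = g (BalTensor.tmul B M N m n)) : f = g :=
  DFunLike.ext f g fun z => by
    induction z using induction_on with
    | zero => simp
    | tmul m n => exact h m n
    | add x y hx hy => rw [map_add, map_add, hx, hy]

lemma tmul_add (m : M) (n n' : N) :
    BalTensor.tmul B M N m (n + n') = BalTensor.tmul B M N m n + BalTensor.tmul B M N m n' := by
  simp only [BalTensor.tmul, TensorProduct.tmul_add, map_add]

lemma add_tmul (m m' : M) (n : N) :
    BalTensor.tmul B M N (m + m') n = BalTensor.tmul B M N m n + BalTensor.tmul B M N m' n := by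
  simp only [BalTensor.tmul, TensorProduct.add_tmul, map_add]

lemma tmul_zero (m : M) : BalTensor.tmul B M N m 0 = 0 := by
  simp only [BalTensor.tmul, TensorProduct.tmul_zero, map_zero]

lemma zero_tmul (n : N) : BalTensor.tmul B M N 0 n = 0 := by
  simp only [BalTensor.tmul, TensorProduct.zero_tmul, map_zero]

variable {Q : Type*} [AddCommGroup Q]

def lift (f : M → N → Q) (add_left : ∀ m m' n, f (m + m') n = f m n + f m' n)
    (add_right : ∀ m n n', f m (n + n') = f m n + f m n')
    (balanced : ∀ (b : B) m n, f (op b • m) n = f m (b • n)) : BalTensor B M N →+ Q :=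
  (Submodule.liftQ (balRel B M N)
    (TensorProduct.lift (AddMonoidHom.mk'
        (fun m => (AddMonoidHom.mk' (f m) (add_right m)).toIntLinearMap)
        (fun m m' => by ext n; exact add_left m m' n)).toIntLinearMap)
    (by
      rw [balRel, Submodule.span_le]
      rintro z ⟨b, m, n, rfl⟩
      refine LinearMap.mem_ker.2 ?_
      erw [map_sub, TensorProduct.lift.tmul, TensorProduct.lift.tmul]
      exact sub_eq_zero.2 (balanced b m n))).toAddMonoidHom

end Basic

section RTensor

variable {B : Type u} [Ring B] {M M' M'' : Type u}
  [AddCommGroup M] [Module Bᵐᵒᵖ M] [AddCommGroup M'] [Module Bᵐᵒᵖ M']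
  [AddCommGroup M''] [Module Bᵐᵒᵖ M'']
  (N : Type u) [AddCommGroup N] [Module B N]
  (C : Type u) [Ring C] [Module Cᵐᵒᵖ N] [SMulCommClass B Cᵐᵒᵖ N]

def rTensor (f : M →ₗ[Bᵐᵒᵖ] M') : BalTensor B M N →ₗ[Cᵐᵒᵖ] BalTensor B M' N where
  toFun := lift (fun m n => BalTensor.tmul B M' N (f m) n)
    (fun m m' n => by rw [map_add, add_tmul]) (fun m n n' => tmul_add (f m) n n')
    (fun b m n => by rw [map_smul, balance])
  map_add' := map_add _
  map_smul' c z := by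
    induction z using induction_on with
    | zero => simp
    | tmul m n => exact (rsmul_tmul B M' N C c (f m) n).symm
    | add x y hx hy => simp only [smul_add, map_add, hx, hy]

@[simp]
lemma rTensor_tmul (f : M →ₗ[Bᵐᵒᵖ] M') (m : M) (n : N) :
    rTensor N C f (BalTensor.tmul B M N m n) = BalTensor.tmul B M' N (f m) n :=
  rfl

@[simp]
lemma rTensor_id : rTensor N C (LinearMap.id : M →ₗ[Bᵐᵒᵖ] M) = LinearMap.id :=
  hom_ext fun _ _ => rfl

lemma rTensor_comp (g : M' →ₗ[Bᵐᵒᵖ] M'') (f : M →ₗ[Bᵐᵒᵖ] M') :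
    rTensor N C (g ∘ₗ f) = rTensor N C g ∘ₗ rTensor N C f :=
  hom_ext fun _ _ => rfl

lemma rTensor_sum {ι : Type*} (s : Finset ι) (f : ι → M →ₗ[Bᵐᵒᵖ] M') :
    rTensor N C (∑ j ∈ s, f j) = ∑ j ∈ s, rTensor N C (f j) := by
  classical
  induction s using Finset.induction_on with
  | empty =>
    refine hom_ext fun m n => ?_
    simp only [Finset.sum_empty, rTensor_tmul, LinearMap.zero_apply, zero_tmul]
  | insert j s hj ih =>
    rw [Finset.sum_insert hj, Finset.sum_insert hj, ← ih]
    refine hom_ext fun m n => ?_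
    simp only [rTensor_tmul, LinearMap.add_apply, LinearMap.coe_sum, Finset.sum_apply, add_tmul]

end RTensor

instance instFinite {B : Type u} [Ring B] {M : Type u} [AddCommGroup M] [Module Bᵐᵒᵖ M]
    {N : Type u} [AddCommGroup N] [Module B N] {C : Type u} [Ring C] [Module Cᵐᵒᵖ N]
    [SMulCommClass B Cᵐᵒᵖ N] [Module.Finite Bᵐᵒᵖ M] [Module.Finite Cᵐᵒᵖ N] :
    Module.Finite Cᵐᵒᵖ (BalTensor B M N) := by
  obtain ⟨sM, hsM⟩ := Module.Finite.fg_top (R := Bᵐᵒᵖ) (M := M)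
  obtain ⟨sN, hsN⟩ := Module.Finite.fg_top (R := Cᵐᵒᵖ) (M := N)
  let T := Set.image2 (BalTensor.tmul B M N) sM sN
  have hT : ∀ m n, BalTensor.tmul B M N m n ∈ Submodule.span Cᵐᵒᵖ T := by
    intro m
    induction (hsM ▸ Submodule.mem_top : m ∈ Submodule.span Bᵐᵒᵖ (sM : Set M))
      using Submodule.span_induction with
    | mem m hm =>
      intro n
      induction (hsN ▸ Submodule.mem_top : n ∈ Submodule.span Cᵐᵒᵖ (sN : Set N))
        using Submodule.span_induction with
      | mem n hn => exact Submodule.subset_span (Set.mem_image2_of_mem hm hn)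
      | zero => rw [tmul_zero]; exact zero_mem _
      | add n n' _ _ h h' => rw [tmul_add]; exact add_mem h h'
      | smul c n _ h => rw [← rsmul_tmul]; exact Submodule.smul_mem _ c h
    | zero => intro n; rw [zero_tmul]; exact zero_mem _
    | add m m' _ _ h h' => intro n; rw [add_tmul]; exact add_mem (h n) (h' n)
    | smul b m _ h => intro n; rw [← op_unop b, balance]; exact h _
  rw [Module.finite_def, Submodule.fg_def]
  refine ⟨T, sM.finite_toSet.image2 _ sN.finite_toSet, Submodule.eq_top_iff'.2 fun z => ?_⟩
  induction z using induction_on with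
  | zero => exact zero_mem _
  | tmul m n => exact hT m n
  | add x y hx hy => exact add_mem hx hy

end BalTensor

def IsRetract (R : Type*) [Ring R] (X Y : Type*) [AddCommGroup X] [Module R X]
    [AddCommGroup Y] [Module R Y] : Prop :=
  ∃ (i : X →ₗ[R] Y) (p : Y →ₗ[R] X), p ∘ₗ i = LinearMap.id

namespace IsRetract

variable {R : Type*} [Ring R] {X Y Z : Type*} [AddCommGroup X] [Module R X]
  [AddCommGroup Y] [Module R Y] [AddCommGroup Z] [Module R Z]

lemma of_linearEquiv (e : X ≃ₗ[R] Y) : IsRetract R X Y :=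
  ⟨e, e.symm, by ext; simp⟩

lemma trans (hXY : IsRetract R X Y) (hYZ : IsRetract R Y Z) : IsRetract R X Z := by
  obtain ⟨i, p, hpi⟩ := hXY
  obtain ⟨i', p', hpi'⟩ := hYZ
  refine ⟨i' ∘ₗ i, p ∘ₗ p', ?_⟩
  rw [LinearMap.comp_assoc, ← LinearMap.comp_assoc i, hpi', LinearMap.id_comp, hpi]

end IsRetract

lemma IsRetract.rTensor {B : Type u} [Ring B] {M M' : Type u}
    [AddCommGroup M] [Module Bᵐᵒᵖ M] [AddCommGroup M'] [Module Bᵐᵒᵖ M']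
    (N : Type u) [AddCommGroup N] [Module B N]
    (C : Type u) [Ring C] [Module Cᵐᵒᵖ N] [SMulCommClass B Cᵐᵒᵖ N]
    (h : IsRetract Bᵐᵒᵖ M M') : IsRetract Cᵐᵒᵖ (BalTensor B M N) (BalTensor B M' N) := by
  obtain ⟨i, p, hpi⟩ := h
  exact ⟨BalTensor.rTensor N C i, BalTensor.rTensor N C p,
    by rw [← BalTensor.rTensor_comp, hpi, BalTensor.rTensor_id]⟩

section Contraction

variable {A B : Type u} [Ring A] [Ring B]
  {M : Type u} [AddCommGroup M] [Module B M] [Module Aᵐᵒᵖ M] [SMulCommClass B Aᵐᵒᵖ M]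
  {N : Type u} [AddCommGroup N] [Module A N] [Module Bᵐᵒᵖ N] [SMulCommClass A Bᵐᵒᵖ N]
  {X : Type u} [AddCommGroup X] [Module Bᵐᵒᵖ X]

open BalTensor

variable (B) in
def assocTmul (x : X) : BalTensor A M N →+ BalTensor A (BalTensor B X M) N :=
  lift (fun m n => tmul A _ N (tmul B X M x m) n)
    (fun m m' n => by rw [tmul_add, add_tmul])
    (fun m n n' => tmul_add _ n n')
    (fun a m n => by rw [← rsmul_tmul B X M A (op a), balance])

lemma assocTmul_tmul (x : X) (m : M) (n : N) :
    assocTmul B x (tmul A M N m n) = tmul A _ N (tmul B X M x m) n :=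
  rfl

lemma assocTmul_add (x x' : X) (t : BalTensor A M N) :
    assocTmul B (x + x') t = assocTmul B x t + assocTmul B x' t := by
  induction t using induction_on with
  | zero => simp
  | tmul m n => simp only [assocTmul_tmul, add_tmul]
  | add s t hs ht => simp only [map_add, hs, ht]; abel

lemma assocTmul_op_smul (b : B) (x : X) (t : BalTensor A M N) :
    assocTmul B (op b • x) t = assocTmul B x (b • t) := by
  induction t using induction_on with
  | zero => simp
  | tmul m n => rw [lsmul_tmul, assocTmul_tmul, assocTmul_tmul, balance]
  | add s t hs ht => rw [smul_add, map_add, map_add, hs, ht]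

lemma assocTmul_smul (x : X) (c : Bᵐᵒᵖ) (t : BalTensor A M N) :
    assocTmul B x (c • t) = c • assocTmul B x t := by
  induction t using induction_on with
  | zero => simp
  | tmul m n => rw [rsmul_tmul, assocTmul_tmul, assocTmul_tmul, rsmul_tmul]
  | add s t hs ht => rw [smul_add, map_add, map_add, hs, ht, smul_add]

variable (φ : BalTensor A M N → B) (hφ : IsBimodHom B B (BalTensor A M N) B φ)

def contractAux (n : N) : BalTensor B X M →+ X :=
  lift (fun x m => op (φ (tmul A M N m n)) • x)
    (fun x x' m => smul_add _ x x')
    (fun x m m' => by rw [add_tmul, hφ.map_add, op_add, add_smul])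
    (fun b x m => by
      rw [← lsmul_tmul, hφ.map_lsmul, smul_eq_mul, op_mul, mul_smul])

lemma contractAux_tmul (n : N) (x : X) (m : M) :
    contractAux φ hφ n (tmul B X M x m) = op (φ (tmul A M N m n)) • x :=
  rfl

def contract : BalTensor A (BalTensor B X M) N →ₗ[Bᵐᵒᵖ] X where
  toFun := lift (fun s n => contractAux φ hφ n s) (fun s s' n => map_add _ s s')
    (fun s n n' => by
      induction s using induction_on with
      | zero => simp
      | tmul x m => simp only [contractAux_tmul, tmul_add, hφ.map_add, op_add, add_smul]
      | add s s' hs hs' => simp only [map_add, hs, hs']; abel)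
    (fun a s n => by
      induction s using induction_on with
      | zero => simp
      | tmul x m => rw [rsmul_tmul, contractAux_tmul, contractAux_tmul, balance]
      | add s s' hs hs' => rw [smul_add, map_add, map_add, hs, hs'])
  map_add' := map_add _
  map_smul' c w := by
    induction w using induction_on with
    | zero => simp
    | tmul s n =>
      change contractAux φ hφ (c • n) s = c • contractAux φ hφ n s
      induction s using induction_on with
      | zero => simp
      | tmul x m =>
        induction c using MulOpposite.rec' with | h b => ?_
        rw [contractAux_tmul, contractAux_tmul, ← rsmul_tmul, hφ.map_rsmul, op_smul_eq_mul,
          op_mul, mul_smul]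
      | add s s' hs hs' => simp only [smul_add, map_add, hs, hs']
    | add w w' hw hw' => simp only [smul_add, map_add, hw, hw']

lemma contract_assocTmul (x : X) (t : BalTensor A M N) :
    contract φ hφ (assocTmul B x t) = op (φ t) • x := by
  induction t using induction_on with
  | zero =>
    rw [map_zero, map_zero, show φ 0 = 0 from (AddMonoidHom.mk' φ hφ.map_add).map_zero, op_zero,
      zero_smul]
  | tmul m n => rfl
  | add s t hs ht => rw [map_add, map_add, hs, ht, hφ.map_add, op_add, add_smul]

end Contraction

theorem isRetract_balTensor_balTensor {A B : Type u} [Ring A] [Ring B]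
    {M : Type u} [AddCommGroup M] [Module B M] [Module Aᵐᵒᵖ M] [SMulCommClass B Aᵐᵒᵖ M]
    {N : Type u} [AddCommGroup N] [Module A N] [Module Bᵐᵒᵖ N] [SMulCommClass A Bᵐᵒᵖ N]
    (h : IsBimodSummand B B B (BalTensor A M N))
    (X : Type u) [AddCommGroup X] [Module Bᵐᵒᵖ X] :
    IsRetract Bᵐᵒᵖ X (BalTensor A (BalTensor B X M) N) := by
  obtain ⟨ι, φ, hι, hφ, hφι⟩ := h
  have hcentral (b : B) : b • ι 1 = op b • ι 1 := by
    rw [← hι.map_lsmul, ← hι.map_rsmul, smul_eq_mul, op_smul_eq_mul, mul_one, one_mul]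
  refine ⟨{ toFun := fun x => assocTmul B x (ι 1)
            map_add' := fun x x' => assocTmul_add x x' _
            map_smul' := fun c x => ?_ }, contract φ hφ, LinearMap.ext fun x => ?_⟩
  · induction c using MulOpposite.rec' with
    | h b => rw [RingHom.id_apply, assocTmul_op_smul, hcentral, assocTmul_smul]
  · simp [contract_assocTmul, hφι]

namespace IsIndecomposableModule

variable {R : Type u} [Ring R] {X : Type u} [AddCommGroup X] [Module R X]
  [IsArtinian R X] [IsNoetherian R X]

-- Fitting's lemma: `X = ker fⁿ ⊕ range fⁿ` for `n` large, and one of the two summands vanishes.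
lemma isUnit_or_isNilpotent (hX : IsIndecomposableModule R X) (f : Module.End R X) :
    IsUnit f ∨ IsNilpotent f := by
  obtain ⟨n, hn, hpos⟩ :=
    (f.eventually_isCompl_ker_pow_range_pow.and (Filter.eventually_ge_atTop 1)).exists
  rcases hX.2 _ _ hn with hker | hrange
  · rw [hker] at hn
    refine .inl ((isUnit_pow_iff (by omega : n ≠ 0)).1 ((Module.End.isUnit_iff _).2 ?_))
    exact ⟨LinearMap.ker_eq_bot.1 hker, LinearMap.range_eq_top.1 (eq_top_of_bot_isCompl hn)⟩
  · exact .inr ⟨n, LinearMap.range_eq_bot.1 hrange⟩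

lemma isLocalRing_end (hX : IsIndecomposableModule R X) : IsLocalRing (Module.End R X) :=
  have := hX.1
  .of_isUnit_or_isUnit_one_sub_self fun f =>
    (hX.isUnit_or_isNilpotent f).imp_right IsNilpotent.isUnit_one_sub

end IsIndecomposableModule

-- A finite direct sum decomposition, recorded only through `∑ incl ∘ proj = id`:
-- the exchange argument needs nothing more.
structure Decomposition (R : Type u) [Ring R] (Y : Type u) [AddCommGroup Y] [Module R Y] where
  ι : Type
  [fintype : Fintype ι]
  summand : ι → ModuleCat.{u} R
  proj : ∀ j, Y →ₗ[R] summand j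
  incl : ∀ j, summand j →ₗ[R] Y
  sum_incl_comp_proj : ∑ j, incl j ∘ₗ proj j = LinearMap.id

attribute [instance] Decomposition.fintype

namespace Decomposition

variable {R : Type u} [Ring R] {Y : Type u} [AddCommGroup Y] [Module R Y]

def SummandsIndecomposable (D : Decomposition R Y) : Prop :=
  ∀ j, Module.Finite R (D.summand j) ∧ IsIndecomposableModule R (D.summand j)

variable (Y) in
def single : Decomposition R Y where
  ι := Unit
  summand _ := ModuleCat.of R Y
  proj _ := LinearMap.id
  incl _ := LinearMap.id
  sum_incl_comp_proj := by simp

variable (Y) in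
def ofSubsingleton [Subsingleton Y] : Decomposition R Y where
  ι := Empty
  summand := Empty.elim
  proj := fun j => j.elim
  incl := fun j => j.elim
  sum_incl_comp_proj := Subsingleton.elim _ _

def ofIsCompl {S T : Submodule R Y} (h : IsCompl S T) (DS : Decomposition R S)
    (DT : Decomposition R T) : Decomposition R Y where
  ι := DS.ι ⊕ DT.ι
  summand := Sum.elim DS.summand DT.summand
  proj := Sum.rec (fun j => DS.proj j ∘ₗ S.projectionOnto T h)
    (fun j => DT.proj j ∘ₗ T.projectionOnto S h.symm)
  incl := Sum.rec (fun j => S.subtype ∘ₗ DS.incl j) (fun j => T.subtype ∘ₗ DT.incl j)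
  sum_incl_comp_proj := by
    ext y
    have hS := LinearMap.congr_fun DS.sum_incl_comp_proj (S.projectionOnto T h y)
    have hT := LinearMap.congr_fun DT.sum_incl_comp_proj (T.projectionOnto S h.symm y)
    rw [LinearMap.sum_apply] at hS hT
    rw [LinearMap.sum_apply, Fintype.sum_sum_type]
    change ∑ j, (S.subtype (DS.incl j (DS.proj j _)) : Y)
      + ∑ j, (T.subtype (DT.incl j (DT.proj j _)) : Y) = y
    simp only [← map_sum]
    simp only [LinearMap.comp_apply, LinearMap.id_apply] at hS hT
    rw [hS, hT, Submodule.subtype_apply, Submodule.subtype_apply,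
      Submodule.coe_projectionOnto_apply, Submodule.coe_projectionOnto_apply,
      Submodule.projection_add_projection_eq_self]

def rTensor {A : Type u} [Ring A] {Y : Type u} [AddCommGroup Y] [Module Aᵐᵒᵖ Y]
    (D : Decomposition Aᵐᵒᵖ Y) (N : Type u) [AddCommGroup N] [Module A N]
    (C : Type u) [Ring C] [Module Cᵐᵒᵖ N] [SMulCommClass A Cᵐᵒᵖ N] :
    Decomposition Cᵐᵒᵖ (BalTensor A Y N) where
  ι := D.ι
  summand j := ModuleCat.of Cᵐᵒᵖ (BalTensor A (D.summand j) N)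
  proj j := BalTensor.rTensor N C (D.proj j)
  incl j := BalTensor.rTensor N C (D.incl j)
  sum_incl_comp_proj := by
    simp only [← BalTensor.rTensor_comp, ← BalTensor.rTensor_sum, D.sum_incl_comp_proj,
      BalTensor.rTensor_id]

theorem exists_summandsIndecomposable (X : Type u) [AddCommGroup X] [Module R X]
    [IsArtinian R X] [IsNoetherian R X] :
    ∃ D : Decomposition R X, D.SummandsIndecomposable := by
  induction hX : Module.length R X using WellFoundedLT.induction generalizing X with
  | _ n ih =>
    by_cases hsub : Subsingleton X
    · exact ⟨ofSubsingleton X, fun j => j.elim⟩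
    rw [not_subsingleton_iff_nontrivial] at hsub
    by_cases hind : IsIndecomposableModule R X
    · exact ⟨single X, fun _ => ⟨Module.IsNoetherian.finite R X, hind⟩⟩
    obtain ⟨S, T, hST, hS, hT⟩ : ∃ S T : Submodule R X, IsCompl S T ∧ S ≠ ⊥ ∧ T ≠ ⊥ := by
      simpa [IsIndecomposableModule, hsub] using hind
    have hlt {U V : Submodule R X} (hUV : IsCompl U V) (hV : V ≠ ⊥) : Module.length R U < n := by
      refine hX ▸ Submodule.length_lt fun hU => hV ?_
      exact eq_bot_of_top_isCompl (hU ▸ hUV)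
    obtain ⟨DS, hDS⟩ := ih _ (hlt hST hT) S rfl
    obtain ⟨DT, hDT⟩ := ih _ (hlt hST.symm hS) T rfl
    exact ⟨ofIsCompl hST DS DT, Sum.rec hDS hDT⟩

end Decomposition

namespace IsRetract

variable {R : Type u} [Ring R] {X Y : Type u} [AddCommGroup X] [Module R X]
  [AddCommGroup Y] [Module R Y]

theorem exists_summand [IsArtinian R X] [IsNoetherian R X] (hX : IsIndecomposableModule R X)
    (h : IsRetract R X Y) (D : Decomposition R Y) : ∃ j, IsRetract R X (D.summand j) := by
  obtain ⟨i, p, hpi⟩ := h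
  have := hX.isLocalRing_end
  have hsum : ∑ j, p ∘ₗ D.incl j ∘ₗ D.proj j ∘ₗ i = 1 := by
    ext x
    have := LinearMap.congr_fun D.sum_incl_comp_proj (i x)
    rw [LinearMap.sum_apply] at this
    rw [LinearMap.sum_apply]
    simp only [LinearMap.comp_apply, LinearMap.id_apply] at this ⊢
    rw [← map_sum, this, ← LinearMap.comp_apply p i, hpi]
    rfl
  obtain ⟨j, -, hj⟩ := IsLocalRing.exists_of_isUnit_sum (hsum ▸ isUnit_one)
  exact ⟨j, D.proj j ∘ₗ i, ↑hj.unit⁻¹ ∘ₗ p ∘ₗ D.incl j, hj.val_inv_mul⟩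

theorem nonempty_linearEquiv [Nontrivial X] (hY : IsIndecomposableModule R Y)
    (h : IsRetract R X Y) : Nonempty (X ≃ₗ[R] Y) := by
  obtain ⟨i, p, hpi⟩ := h
  have hidem : IsIdempotentElem (i ∘ₗ p) :=
    LinearMap.ext fun y => congrArg i (LinearMap.congr_fun hpi (p y))
  rcases hY.2 _ _ (LinearMap.IsIdempotentElem.isCompl hidem) with hrange | hker
  · obtain ⟨x, hx⟩ := exists_ne (0 : X)
    refine absurd ?_ hx
    calc x = p (i (p (i x))) := by simp only [← LinearMap.comp_apply, hpi, LinearMap.id_apply]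
      _ = 0 := by rw [← LinearMap.comp_apply i p, LinearMap.range_eq_bot.1 hrange]; simp
  · have hip : i ∘ₗ p = LinearMap.id :=
      LinearMap.ext fun y => LinearMap.ker_eq_bot.1 hker (LinearMap.congr_fun hidem y)
    exact ⟨.ofLinearMap i p hip hpi⟩

end IsRetract

theorem FiniteRepresentationType.of_fintype {R : Type u} [Ring R] {ι : Type} [Fintype ι]
    (V : ι → ModuleCat.{u} R)
    (h : ∀ X : ModuleCat.{u} R, Module.Finite R X → IsIndecomposableModule R X →
      ∃ i, Nonempty (X ≃ₗ[R] V i)) :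
    FiniteRepresentationType R := by
  refine ⟨Fintype.card ι, V ∘ (Fintype.equivFin ι).symm, fun X hfin hind => ?_⟩
  obtain ⟨i, e⟩ := h X hfin hind
  exact ⟨Fintype.equivFin ι i, by rwa [Function.comp_apply, Equiv.symm_apply_apply]⟩

theorem FiniteRepresentationType.of_jge {k A B : Type u} [Field k]
    [Ring A] [Algebra k A] [FiniteDimensional k A] [Ring B] [Algebra k B] [FiniteDimensional k B]
    (h : Jge k B A) (hA : FiniteRepresentationType Aᵐᵒᵖ) : FiniteRepresentationType Bᵐᵒᵖ := by
  obtain ⟨M, N, hMN⟩ := h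
  obtain ⟨n, V, hV⟩ := hA
  have := IsArtinianRing.of_finite k Aᵐᵒᵖ
  have := IsArtinianRing.of_finite k Bᵐᵒᵖ
  have : IsNoetherianRing Aᵐᵒᵖ := isNoetherian_of_tower k inferInstance
  have : IsNoetherianRing Bᵐᵒᵖ := isNoetherian_of_tower k inferInstance
  have : Module.Finite Aᵐᵒᵖ M.X := .of_restrictScalars_finite k _ _
  have : Module.Finite Bᵐᵒᵖ N.X := .of_restrictScalars_finite k _ _
  have hD (i : {i // Module.Finite Aᵐᵒᵖ (V i)}) :
      ∃ D : Decomposition Bᵐᵒᵖ (BalTensor A (V i) N.X), D.SummandsIndecomposable :=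
    have := i.2
    Decomposition.exists_summandsIndecomposable _
  choose D hD using hD
  classical
  refine .of_fintype (fun c : Σ i, (D i).ι => (D c.1).summand c.2) fun X _ hX => ?_
  obtain ⟨E, hE⟩ := Decomposition.exists_summandsIndecomposable (R := Aᵐᵒᵖ) (BalTensor B X M.X)
  obtain ⟨j, hj⟩ := (isRetract_balTensor_balTensor hMN X).exists_summand hX (E.rTensor N.X B)
  obtain ⟨i, ⟨e⟩⟩ := hV (E.summand j) (hE j).1 (hE j).2
  let i' : {i // Module.Finite Aᵐᵒᵖ (V i)} := ⟨i, have := (hE j).1; .equiv e⟩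
  obtain ⟨l, hl⟩ := (hj.trans ((IsRetract.of_linearEquiv e).rTensor N.X B)).exists_summand hX (D i')
  have := hX.1
  exact ⟨⟨i', l⟩, hl.nonempty_linearEquiv (hD i' l).2⟩

theorem stmt10_general (k A B : Type u) [Field k]
    [Ring A] [Algebra k A] [FiniteDimensional k A]
    [Ring B] [Algebra k B] [FiniteDimensional k B]
    (h : Jge k B A) :
    (FiniteRepresentationType Aᵐᵒᵖ → FiniteRepresentationType Bᵐᵒᵖ) ∧
    (Jequiv k A B → (FiniteRepresentationType Aᵐᵒᵖ ↔ FiniteRepresentationType Bᵐᵒᵖ)) :=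
  ⟨.of_jge h, fun hAB => ⟨.of_jge h, .of_jge hAB.1⟩⟩

/-- Over an algebraically closed field, if `A ≤_J B` and `A` has finite
representation type (for right modules), then so does `B`. In particular, `J`-equivalent
algebras have finite representation type simultaneously. -/
theorem stmt10 (k A B : Type u) [Field k] [IsAlgClosed k]
    [Ring A] [Algebra k A] [FiniteDimensional k A]
    [Ring B] [Algebra k B] [FiniteDimensional k B]
    (h : Jge k B A) :
    (FiniteRepresentationType Aᵐᵒᵖ → FiniteRepresentationType Bᵐᵒᵖ) ∧
    (Jequiv k A B → (FiniteRepresentationType Aᵐᵒᵖ ↔ FiniteRepresentationType Bᵐᵒᵖ)) :=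
  stmt10_general k A B h

end

end JJ
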